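/- arXiv:1903.11189 — 12 statements merged into one kernel-verified Lean document; each statement's English description precedes it below -/
import Mathlib

section
/- For the unconstrained optimal trajectory with free terminal speed, the constants of integration are uniquely determined by the boundary conditions: c = v⁰, d = p⁰, b = −a·t_m, and a = 3·(v⁰·t_m − (pᵐ − p⁰))/t_m³. In particular (Lemma 1), the transversality condition u(t_m) = 0 forces t_m = −b/a whenever a ≠ 0. -/
/-- Unconstrained optimal trajectory with free terminal speed:
the constants of integration are uniquely determined by the boundary
conditions, and the transversality condition forces `t_m = -b/a` when `a ≠ 0`. -/
theorem stmt_0 (a b c d p0 v0 pm tm : ℝ) (htm : 0 < tm)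
    (p v u : ℝ → ℝ)
    (hp : ∀ t, p t = a / 6 * t ^ 3 + b / 2 * t ^ 2 + c * t + d)
    (hv : ∀ t, v t = a / 2 * t ^ 2 + b * t + c)
    (hu : ∀ t, u t = a * t + b)
    (hp0 : p 0 = p0) (hv0 : v 0 = v0) (hpm : p tm = pm)
    (htrans : u tm = 0) :
    c = v0 ∧ d = p0 ∧ b = -a * tm ∧
      a = 3 * (v0 * tm - (pm - p0)) / tm ^ 3 ∧
      (a ≠ 0 → tm = -b / a) := by
  rw [hp, hv] at *
  rw [hu] at htrans
  have htm' : tm ≠ 0 := ne_of_gt htm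
  have hc : c = v0 := by linarith [hv0]
  have hd : d = p0 := by nlinarith [hp0]
  have hb : b = -a * tm := by linarith
  refine ⟨hc, hd, hb, ?_, ?_⟩
  · field_simp
    nlinarith [hpm]
  · intro ha
    field_simp
    linarith
end

section
/- (Lemma 2, part 1) For the unconstrained optimal trajectory with free terminal speed, if v⁰ < (pᵐ − p⁰)/t_m then a < 0, i.e., the optimal acceleration profile u(t) = a·t + b is strictly linearly decreasing. -/
/-- Lemma 2, part 1: if `v⁰ < (pᵐ − p⁰)/t_m` then `a < 0`, i.e. the optimal
acceleration profile `u(t) = a·t + b` is strictly linearly decreasing. -/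
theorem stmt_2 (a b c d p0 v0 pm tm : ℝ) (htm : 0 < tm)
    (p v u : ℝ → ℝ)
    (hp : ∀ t, p t = a / 6 * t ^ 3 + b / 2 * t ^ 2 + c * t + d)
    (hv : ∀ t, v t = a / 2 * t ^ 2 + b * t + c)
    (hu : ∀ t, u t = a * t + b)
    (hp0 : p 0 = p0) (hv0 : v 0 = v0) (hpm : p tm = pm)
    (htrans : u tm = 0)
    (hslow : v0 < (pm - p0) / tm) :
    a < 0 := by
  rw [hp 0] at hp0
  rw [hv 0] at hv0
  rw [hp tm] at hpm
  rw [hu tm] at htrans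
  rw [lt_div_iff₀ htm] at hslow
  nlinarith [sq_nonneg tm, mul_pos htm htm, sq_nonneg a, mul_pos (mul_pos htm htm) htm]
end

section
/- (Lemma 2, part 2) For the unconstrained optimal trajectory with free terminal speed, if v⁰ > (pᵐ − p⁰)/t_m then a > 0, i.e., the optimal acceleration profile u(t) = a·t + b is strictly linearly increasing. -/
/-- Lemma 2, part 2: if `v⁰ > (pᵐ − p⁰)/t_m` then `a > 0`, i.e. the optimal
acceleration profile `u(t) = a·t + b` is strictly linearly increasing. -/
theorem stmt_3 (a b c d p0 v0 pm tm : ℝ) (htm : 0 < tm)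
    (p v u : ℝ → ℝ)
    (hp : ∀ t, p t = a / 6 * t ^ 3 + b / 2 * t ^ 2 + c * t + d)
    (hv : ∀ t, v t = a / 2 * t ^ 2 + b * t + c)
    (hu : ∀ t, u t = a * t + b)
    (hp0 : p 0 = p0) (hv0 : v 0 = v0) (hpm : p tm = pm)
    (htrans : u tm = 0)
    (hfast : v0 > (pm - p0) / tm) :
    a > 0 := by
  rw [hp, hu] at *
  rw [hv] at hv0
  rw [gt_iff_lt, div_lt_iff₀ htm] at hfast
  nlinarith [sq_nonneg tm, mul_pos htm htm, mul_pos (mul_pos htm htm) htm]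
end

section
/- (Lemma 3, part 2) For the unconstrained optimal trajectory with free terminal speed and a > 0: for every t ∈ [0, t_m] one has u(t) ≤ 0 and v(t_m) ≤ v(t) ≤ v⁰; in particular the speed v is monotonically decreasing on [0, t_m]. Consequently, if u_max > 0 and v⁰ ≤ v_max, then the constraints u(t) ≤ u_max and v(t) ≤ v_max are never activated on [0, t_m], i.e., u(t) < u_max and v(t) ≤ v_max for all t ∈ [0, t_m]. -/
/-- Lemma 3, part 2: for the unconstrained optimal trajectory with free
terminal speed and `a > 0`, one has `u(t) ≤ 0` and `v(t_m) ≤ v(t) ≤ v⁰` on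
`[0, t_m]`; the speed is monotonically decreasing on `[0, t_m]`; and if
`u_max > 0` and `v⁰ ≤ v_max` then the constraints `u(t) ≤ u_max` and
`v(t) ≤ v_max` are never activated on `[0, t_m]`. -/
theorem stmt_5 (a b c d p0 v0 pm tm umin umax vmin vmax : ℝ) (htm : 0 < tm)
    (humin : umin < 0) (humax : 0 < umax) (hvmin : 0 ≤ vmin) (hvlt : vmin < vmax)
    (p v u : ℝ → ℝ)
    (hp : ∀ t, p t = a / 6 * t ^ 3 + b / 2 * t ^ 2 + c * t + d)
    (hv : ∀ t, v t = a / 2 * t ^ 2 + b * t + c)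
    (hu : ∀ t, u t = a * t + b)
    (hp0 : p 0 = p0) (hv0 : v 0 = v0) (hpm : p tm = pm)
    (htrans : u tm = 0)
    (ha : a > 0) :
    (∀ t ∈ Set.Icc (0 : ℝ) tm, u t ≤ 0 ∧ v tm ≤ v t ∧ v t ≤ v0) ∧
      AntitoneOn v (Set.Icc (0 : ℝ) tm) ∧
      (v0 ≤ vmax →
        ∀ t ∈ Set.Icc (0 : ℝ) tm, u t < umax ∧ v t ≤ vmax) := by
  rw [hu tm] at htrans
  have hb : b = -a * tm := by linarith
  have hanti : AntitoneOn v (Set.Icc (0 : ℝ) tm) := by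
    intro s hs t ht hst
    rw [hv s, hv t, hb]
    rcases hs with ⟨hs0, hsm⟩
    rcases ht with ⟨ht0, htm'⟩
    nlinarith [mul_nonneg (sub_nonneg.mpr hst) (sub_nonneg.mpr (by linarith : s + t ≤ 2 * tm)), ha.le]
  refine ⟨?_, hanti, ?_⟩
  · intro t ht
    rcases ht with ⟨ht0, htm'⟩
    refine ⟨by rw [hu t, hb]; nlinarith, ?_, ?_⟩
    · exact hanti ⟨ht0, htm'⟩ ⟨le_of_lt htm, le_rfl⟩ htm'
    · rw [← hv0]
      exact hanti ⟨le_rfl, le_of_lt htm⟩ ⟨ht0, htm'⟩ ht0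
  · intro hvm t ht
    rcases ht with ⟨ht0, htm'⟩
    constructor
    · rw [hu t, hb]; nlinarith
    · have := hanti ⟨le_rfl, le_of_lt htm⟩ ⟨ht0, htm'⟩ ht0
      rw [hv0] at this; linarith
end

section
/- (Theorem 1, part 1) For the unconstrained optimal trajectory with free terminal speed, if v⁰ < (pᵐ − p⁰)/t_m, and if u_min < 0 and v_min ≤ v⁰, then the state constraint v(t) ≥ v_min and the control constraint u(t) ≥ u_min are never activated: for all t ∈ [0, t_m], v(t) ≥ v_min and u(t) > u_min. -/
/-- Theorem 1, part 1: if `v⁰ < (pᵐ − p⁰)/t_m`, `u_min < 0` and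
`v_min ≤ v⁰`, then the state constraint `v(t) ≥ v_min` and the control
constraint `u(t) ≥ u_min` are never activated on `[0, t_m]`. -/
theorem stmt_8 (a b c d p0 v0 pm tm umin umax vmin vmax : ℝ) (htm : 0 < tm)
    (humin : umin < 0) (humax : 0 < umax) (hvmin : 0 ≤ vmin) (hvlt : vmin < vmax)
    (p v u : ℝ → ℝ)
    (hp : ∀ t, p t = a / 6 * t ^ 3 + b / 2 * t ^ 2 + c * t + d)
    (hv : ∀ t, v t = a / 2 * t ^ 2 + b * t + c)
    (hu : ∀ t, u t = a * t + b)
    (hp0 : p 0 = p0) (hv0 : v 0 = v0) (hpm : p tm = pm)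
    (htrans : u tm = 0)
    (hslow : v0 < (pm - p0) / tm) (hvm0 : vmin ≤ v0) :
    ∀ t ∈ Set.Icc (0 : ℝ) tm, vmin ≤ v t ∧ umin < u t := by
  have hc : c = v0 := by have h := hv 0; rw [hv0] at h; linarith [h]; 
  have hd : d = p0 := by have h := hp 0; rw [hp0] at h; nlinarith [h]
  have hb : b = -a * tm := by have h := hu tm; rw [htrans] at h; linarith
  have hvtm : v0 * tm < pm - p0 := by
    rw [lt_div_iff₀ htm] at hslow; linarith
  have ha : a < 0 := by
    have h := hp tm; rw [hpm] at h
    nlinarith [pow_pos htm 3, h, sq_nonneg tm]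
  intro t ht
  obtain ⟨ht0, httm⟩ := ht
  constructor
  · rw [hv t, hb, hc]
    nlinarith [mul_nonneg ht0 (by linarith : (0:ℝ) ≤ 2 * tm - t)]
  · rw [hu t, hb]
    nlinarith [mul_nonneg (by linarith : (0:ℝ) ≤ -a) (by linarith : (0:ℝ) ≤ tm - t)]
end

section
/- (Theorem 1, part 2) For the unconstrained optimal trajectory with free terminal speed, if v⁰ > (pᵐ − p⁰)/t_m, and if u_max > 0 and v⁰ ≤ v_max, then the state constraint v(t) ≤ v_max and the control constraint u(t) ≤ u_max are never activated: for all t ∈ [0, t_m], v(t) ≤ v_max and u(t) < u_max. -/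
/-- Theorem 1, part 2: if `v⁰ > (pᵐ − p⁰)/t_m`, `u_max > 0` and
`v⁰ ≤ v_max`, then the state constraint `v(t) ≤ v_max` and the control
constraint `u(t) ≤ u_max` are never activated on `[0, t_m]`. -/
theorem stmt_9 (a b c d p0 v0 pm tm umin umax vmin vmax : ℝ) (htm : 0 < tm)
    (humin : umin < 0) (humax : 0 < umax) (hvmin : 0 ≤ vmin) (hvlt : vmin < vmax)
    (p v u : ℝ → ℝ)
    (hp : ∀ t, p t = a / 6 * t ^ 3 + b / 2 * t ^ 2 + c * t + d)
    (hv : ∀ t, v t = a / 2 * t ^ 2 + b * t + c)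
    (hu : ∀ t, u t = a * t + b)
    (hp0 : p 0 = p0) (hv0 : v 0 = v0) (hpm : p tm = pm)
    (htrans : u tm = 0)
    (hfast : v0 > (pm - p0) / tm) (hvm0 : v0 ≤ vmax) :
    ∀ t ∈ Set.Icc (0 : ℝ) tm, v t ≤ vmax ∧ u t < umax := by
  have hc : c = v0 := by have := hv 0; simp at this; linarith [hv0, (hv 0)]
  have hb : b = -a * tm := by have := hu tm; rw [htrans] at this; linarith
  have hpm' : pm - p0 = a / 6 * tm ^ 3 + b / 2 * tm ^ 2 + c * tm := by
    have h1 := hp tm; have h2 := hp 0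
    simp at h2
    rw [hpm] at h1; rw [hp0] at h2; linarith
  have hapos : 0 < a := by
    have hf := (div_lt_iff₀ htm).mp hfast
    rw [hb, hc] at hpm'
    nlinarith [mul_pos (mul_pos htm htm) htm]
  rintro t ⟨ht0, ht1⟩
  constructor
  · rw [hv t, hb, hc]
    nlinarith [mul_nonneg ht0 (sub_nonneg.mpr ht1)]
  · rw [hu t, hb]
    nlinarith [mul_nonneg hapos.le (sub_nonneg.mpr ht1)]
end

section
/- (Theorem 2, part 1) For the unconstrained optimal trajectory with free terminal speed, assume a < 0 and 0 ≤ v⁰ < v_max (so v⁰ + 2·v_max > 0). Then the terminal speed exceeds the speed limit, v(t_m) > v_max, if and only if t_m < 3·(pᵐ − p⁰)/(v⁰ + 2·v_max); and in that case the state constraint v(t) ≤ v_max is activated, i.e., there exists τ_s ∈ (0, t_m) with v(τ_s) = v_max. -/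
/-- Theorem 2, part 1: with `a < 0` and `0 ≤ v⁰ < v_max`, the terminal speed
exceeds the speed limit iff `t_m < 3·(pᵐ − p⁰)/(v⁰ + 2·v_max)`; and in that
case the state constraint `v(t) ≤ v_max` is activated at some `τ_s ∈ (0, t_m)`. -/
theorem stmt_10 (a b c d p0 v0 pm tm vmax : ℝ) (htm : 0 < tm) (hvmax : 0 < vmax)
    (p v u : ℝ → ℝ)
    (hp : ∀ t, p t = a / 6 * t ^ 3 + b / 2 * t ^ 2 + c * t + d)
    (hv : ∀ t, v t = a / 2 * t ^ 2 + b * t + c)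
    (hu : ∀ t, u t = a * t + b)
    (hp0 : p 0 = p0) (hv0 : v 0 = v0) (hpm : p tm = pm)
    (htrans : u tm = 0)
    (ha : a < 0) (hv0nn : 0 ≤ v0) (hv0lt : v0 < vmax) :
    (v tm > vmax ↔ tm < 3 * (pm - p0) / (v0 + 2 * vmax)) ∧
      (v tm > vmax → ∃ τs ∈ Set.Ioo (0 : ℝ) tm, v τs = vmax) := by
  have hc : c = v0 := by have := hv 0; rw [hv0] at this; linarith [this]
  have hd : d = p0 := by have := hp 0; rw [hp0] at this; linarith [this]
  have hb : b = -a * tm := by have := hu tm; rw [htrans] at this; linarith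
  have hpos : 0 < v0 + 2 * vmax := by linarith
  have hpm' : pm - p0 = -a / 3 * tm ^ 3 + v0 * tm := by
    have := hp tm; rw [hpm, hb, hc, hd] at this; linarith [this]
  have hvtm : v tm = -a / 2 * tm ^ 2 + v0 := by
    rw [hv tm, hb, hc]; ring
  constructor
  · rw [hvtm, lt_div_iff₀ hpos, hpm']
    constructor
    · intro h
      nlinarith [sq_nonneg tm, mul_pos htm htm]
    · intro h
      nlinarith [mul_pos htm htm]
  · intro hgt
    have hcont : ContinuousOn v (Set.Icc 0 tm) := by
      have : Continuous v := by
        have : v = fun t => a / 2 * t ^ 2 + b * t + c := funext hv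
        rw [this]; fun_prop
      exact this.continuousOn
    have hmem : vmax ∈ Set.Ioo (v 0) (v tm) := by
      rw [hv0]; exact ⟨hv0lt, hgt⟩
    have := intermediate_value_Ioo htm.le hcont hmem
    obtain ⟨τs, hτs, hvτs⟩ := this
    exact ⟨τs, hτs, hvτs⟩
end

section
/- (Theorem 2, part 2) For the unconstrained optimal trajectory with free terminal speed, assume a > 0 and v⁰ > v_min ≥ 0 with v⁰ + 2·v_min > 0. Then the terminal speed falls below the minimum speed limit, v(t_m) < v_min, if and only if t_m > 3·(pᵐ − p⁰)/(v⁰ + 2·v_min); and in that case the state constraint v(t) ≥ v_min is activated, i.e., there exists τ_s ∈ (0, t_m) with v(τ_s) = v_min. -/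
/-- Theorem 2, part 2: with `a > 0` and `v⁰ > v_min ≥ 0`, `v⁰ + 2·v_min > 0`,
the terminal speed falls below the minimum speed limit iff
`t_m > 3·(pᵐ − p⁰)/(v⁰ + 2·v_min)`; and in that case the state constraint
`v(t) ≥ v_min` is activated at some `τ_s ∈ (0, t_m)`. -/
theorem stmt_11 (a b c d p0 v0 pm tm vmin : ℝ) (htm : 0 < tm) (hvmin : 0 ≤ vmin)
    (p v u : ℝ → ℝ)
    (hp : ∀ t, p t = a / 6 * t ^ 3 + b / 2 * t ^ 2 + c * t + d)
    (hv : ∀ t, v t = a / 2 * t ^ 2 + b * t + c)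
    (hu : ∀ t, u t = a * t + b)
    (hp0 : p 0 = p0) (hv0 : v 0 = v0) (hpm : p tm = pm)
    (htrans : u tm = 0)
    (ha : a > 0) (hv0gt : v0 > vmin) (hpos : v0 + 2 * vmin > 0) :
    (v tm < vmin ↔ tm > 3 * (pm - p0) / (v0 + 2 * vmin)) ∧
      (v tm < vmin → ∃ τs ∈ Set.Ioo (0 : ℝ) tm, v τs = vmin) := by
  have hb : b = -a * tm := by
    have := htrans; rw [hu] at this; linarith
  have hc : c = v0 := by
    have := hv0; rw [hv] at this; nlinarith [this]
  have hd : d = p0 := by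
    have := hp0; rw [hp] at this; nlinarith [this]
  have hpm' : pm = v0 * tm - a * tm ^ 3 / 3 + p0 := by
    rw [← hpm, hp, hb, hc, hd]; ring
  have hvtm : v tm = v0 - a * tm ^ 2 / 2 := by
    rw [hv, hb, hc]; ring
  constructor
  · rw [hvtm, gt_iff_lt, div_lt_iff₀ hpos, hpm']
    constructor
    · intro h
      nlinarith [mul_lt_mul_of_pos_left h htm]
    · intro h
      nlinarith [mul_lt_mul_of_pos_left h htm, mul_pos htm htm]
  · intro h
    have hcont : ContinuousOn v (Set.Icc 0 tm) := by
      have : v = fun t => a / 2 * t ^ 2 + b * t + c := funext hv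
      rw [this]; fun_prop
    have hmem : vmin ∈ Set.Ioo (v tm) (v 0) := by
      constructor
      · exact h
      · rw [hv0]; exact hv0gt
    have := intermediate_value_Ioo' (le_of_lt htm) hcont hmem
    obtain ⟨τ, hτ, hvτ⟩ := this
    exact ⟨τ, hτ, hvτ⟩
end

section
/- (Theorem 3, part 1) For the unconstrained optimal trajectory with free terminal speed, assume a < 0, v⁰ ≥ 0, u_max > 0, and pᵐ > p⁰. Then the control constraint u(t) ≤ u_max is activated (equivalently, by Lemma 4, u(0) > u_max) if and only if t_m < (−3·v⁰ + √(9·(v⁰)² + 12·u_max·(pᵐ − p⁰)))/(2·u_max). -/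
/-- Theorem 3, part 1: with `a < 0`, `v⁰ ≥ 0`, `u_max > 0` and `pᵐ > p⁰`, the
control constraint `u(t) ≤ u_max` is activated on `[0, t_m]` (equivalently
`u(0) > u_max`) iff
`t_m < (−3·v⁰ + √(9·(v⁰)² + 12·u_max·(pᵐ − p⁰)))/(2·u_max)`. -/
theorem stmt_13 (a b c d p0 v0 pm tm umax : ℝ) (htm : 0 < tm)
    (p v u : ℝ → ℝ)
    (hp : ∀ t, p t = a / 6 * t ^ 3 + b / 2 * t ^ 2 + c * t + d)
    (hv : ∀ t, v t = a / 2 * t ^ 2 + b * t + c)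
    (hu : ∀ t, u t = a * t + b)
    (hp0 : p 0 = p0) (hv0 : v 0 = v0) (hpm : p tm = pm)
    (htrans : u tm = 0)
    (ha : a < 0) (hv0nn : 0 ≤ v0) (humax : 0 < umax) (hdist : pm > p0) :
    ((∃ t ∈ Set.Icc (0 : ℝ) tm, u t > umax) ↔ u 0 > umax) ∧
      ((∃ t ∈ Set.Icc (0 : ℝ) tm, u t > umax) ↔
        tm < (-3 * v0 + Real.sqrt (9 * v0 ^ 2 + 12 * umax * (pm - p0))) /
          (2 * umax)) := by
  have hu0 : u 0 = b := by rw [hu]; ring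
  have hatm : a * tm + b = 0 := by have h := htrans; rwa [hu] at h
  have hc : c = v0 := by rw [hv] at hv0; linarith [hv0]
  have hd : d = p0 := by rw [hp] at hp0; linarith [hp0]
  have hpm' : pm = a / 6 * tm ^ 3 + b / 2 * tm ^ 2 + c * tm + d := by
    rw [← hpm, hp]
  have hkey : 3 * (pm - p0) = b * tm ^ 2 + 3 * v0 * tm := by
    rw [hpm', hc, hd]
    nlinarith [hatm]
  have hfirst : (∃ t ∈ Set.Icc (0 : ℝ) tm, u t > umax) ↔ u 0 > umax := by
    constructor
    · rintro ⟨t, ⟨ht0, httm⟩, hut⟩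
      rw [hu] at hut
      rw [hu0]
      nlinarith [mul_nonpos_of_nonpos_of_nonneg ha.le ht0]
    · intro h
      exact ⟨0, ⟨le_refl 0, htm.le⟩, h⟩
  refine ⟨hfirst, hfirst.trans ?_⟩
  rw [hu0]
  set s := Real.sqrt (9 * v0 ^ 2 + 12 * umax * (pm - p0)) with hs
  have hrad : (0:ℝ) ≤ 9 * v0 ^ 2 + 12 * umax * (pm - p0) := by nlinarith
  have hs2 : s ^ 2 = 9 * v0 ^ 2 + 12 * umax * (pm - p0) := Real.sq_sqrt hrad
  have hlhsnn : (0:ℝ) ≤ 2 * umax * tm + 3 * v0 := by nlinarith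
  have h2u : (0:ℝ) < 2 * umax := by linarith
  constructor
  · intro hb
    rw [lt_div_iff₀ h2u]
    have hsq : (2 * umax * tm + 3 * v0) ^ 2 < 9 * v0 ^ 2 + 12 * umax * (pm - p0) := by
      nlinarith [mul_pos (mul_pos htm htm) (sub_pos.mpr hb)]
    have : 2 * umax * tm + 3 * v0 < s := by
      rw [hs]
      exact (Real.lt_sqrt hlhsnn).mpr hsq
    linarith
  · intro h
    rw [lt_div_iff₀ h2u] at h
    have hls : 2 * umax * tm + 3 * v0 < s := by linarith
    have hsq : (2 * umax * tm + 3 * v0) ^ 2 < s ^ 2 := by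
      nlinarith [Real.sqrt_nonneg (9 * v0 ^ 2 + 12 * umax * (pm - p0))]
    rw [hs2] at hsq
    nlinarith [mul_pos htm htm, mul_pos humax (mul_pos htm htm)]
end

section
/- (Theorem 4, part 1) Consider the unconstrained entry arc of a maximum-speed-constrained solution on [0, τ_s] with τ_s > 0: position p(t) = (a/6)·t³ + (b/2)·t² + v⁰·t + p⁰, speed v(t) = (a/2)·t² + b·t + v⁰, control u(t) = a·t + b, satisfying the entry conditions v(τ_s) = v_max and u(τ_s) = 0, where 0 ≤ v⁰ < v_max and u_max > 0. Then the distance traveled along the arc is p(τ_s) − p⁰ = (v⁰ + 2·v_max)·τ_s/3, and the control constraint u(t) ≤ u_max is additionally activated on [0, τ_s] (equivalently u(0) > u_max) if and only if τ_s < (−3·v⁰ + √(9·(v⁰)² + 12·u_max·(p(τ_s) − p⁰)))/(2·u_max), which is in turn equivalent to τ_s < 2·(v_max − v⁰)/u_max. -/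
/-- Theorem 4, part 1: for the unconstrained entry arc of a
maximum-speed-constrained solution on `[0, τ_s]`, entering the constrained arc
with `v(τ_s) = v_max` and `u(τ_s) = 0`, the distance traveled is
`p(τ_s) − p⁰ = (v⁰ + 2·v_max)·τ_s/3`, and the control constraint
`u(t) ≤ u_max` is additionally activated on `[0, τ_s]` (equivalently
`u(0) > u_max`) iff
`τ_s < (−3·v⁰ + √(9·(v⁰)² + 12·u_max·(p(τ_s) − p⁰)))/(2·u_max)`, which is in
turn equivalent to `τ_s < 2·(v_max − v⁰)/u_max`. -/
theorem stmt_15 (a b p0 v0 vmax umax τs : ℝ) (hτs : 0 < τs)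
    (p v u : ℝ → ℝ)
    (hp : ∀ t, p t = a / 6 * t ^ 3 + b / 2 * t ^ 2 + v0 * t + p0)
    (hv : ∀ t, v t = a / 2 * t ^ 2 + b * t + v0)
    (hu : ∀ t, u t = a * t + b)
    (hentryv : v τs = vmax) (hentryu : u τs = 0)
    (hv0nn : 0 ≤ v0) (hv0lt : v0 < vmax) (humax : 0 < umax) :
    p τs - p0 = (v0 + 2 * vmax) * τs / 3 ∧
      ((∃ t ∈ Set.Icc (0 : ℝ) τs, u t > umax) ↔ u 0 > umax) ∧
      (u 0 > umax ↔
        τs < (-3 * v0 + Real.sqrt (9 * v0 ^ 2 + 12 * umax * (p τs - p0))) /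
          (2 * umax)) ∧
      (u 0 > umax ↔ τs < 2 * (vmax - v0) / umax) := by

  have hb : b = -a * τs := by have := hu τs; linarith [hentryu, hu τs]
  have ha : a * τs ^ 2 = -2 * (vmax - v0) := by
    have h := hv τs; rw [hentryv] at h; nlinarith [h]
  have haneg : a < 0 := by nlinarith
  have hdist : p τs - p0 = (v0 + 2 * vmax) * τs / 3 := by
    rw [hp]; nlinarith [ha, hb]
  have hu0 : u 0 = b := by rw [hu]; ring
  have hlast : u 0 > umax ↔ τs < 2 * (vmax - v0) / umax := by
    rw [hu0, hb, lt_div_iff₀ humax]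
    constructor
    · intro h; nlinarith
    · intro h; nlinarith
  refine ⟨hdist, ?_, ?_, hlast⟩
  · constructor
    · rintro ⟨t, ⟨ht0, htτ⟩, ht⟩
      have : u 0 ≥ u t := by rw [hu, hu]; nlinarith
      linarith
    · intro h; exact ⟨0, ⟨le_refl 0, le_of_lt hτs⟩, h⟩
  · rw [hlast, hdist]
    have hS : 9 * v0 ^ 2 + 12 * umax * ((v0 + 2 * vmax) * τs / 3)
        = 9 * v0 ^ 2 + 4 * umax * (v0 + 2 * vmax) * τs := by ring
    rw [hS]
    have huτ : 0 < umax * τs := mul_pos humax hτs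
    have hSnn : (0:ℝ) ≤ 9 * v0 ^ 2 + 4 * umax * (v0 + 2 * vmax) * τs := by
      nlinarith [mul_nonneg huτ.le (by linarith : (0:ℝ) ≤ v0 + 2 * vmax)]
    rw [lt_div_iff₀ (by linarith : (0:ℝ) < 2 * umax)]
    constructor
    · intro h
      have h' : umax * τs < 2 * (vmax - v0) := by
        have := (lt_div_iff₀ humax).mp h; linarith [mul_comm τs umax]
      have h1 : 2 * umax * τs + 3 * v0 < Real.sqrt (9 * v0 ^ 2 + 4 * umax * (v0 + 2 * vmax) * τs) := by
        rw [Real.lt_sqrt (by positivity)]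
        nlinarith [mul_pos huτ (show (0:ℝ) < 2 * (vmax - v0) - umax * τs by linarith)]
      linarith
    · intro h
      have h1 : 2 * umax * τs + 3 * v0 < Real.sqrt (9 * v0 ^ 2 + 4 * umax * (v0 + 2 * vmax) * τs) := by
        linarith
      rw [Real.lt_sqrt (by positivity)] at h1
      have h2 : umax * τs < 2 * (vmax - v0) := by nlinarith [huτ, h1]
      rw [lt_div_iff₀ humax]; linarith
end

section
/- (Theorem 5, part 1) Consider the control-constrained optimal solution in which u(t) = u_max on [0, τ_c] with 0 < τ_c < t_m, followed by the unconstrained exit arc q(t) = (a/6)·t³ + (b/2)·t² + c·t + d on [τ_c, t_m] satisfying q(τ_c) = p⁰ + v⁰·τ_c + u_max·τ_c²/2, q'(τ_c) = v⁰ + u_max·τ_c, q(t_m) = pᵐ, and q''(t_m) = 0, where v⁰ ≥ 0, u_max > 0, and v⁰ + u_max·τ_c < v_max. Then the exit arc additionally activates the state constraint v(t) ≤ v_max, i.e., q'(t_m) > v_max, if and only if t_m < τ_c + 3·(pᵐ − q(τ_c))/(v⁰ + u_max·τ_c + 2·v_max). -/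
/-- Theorem 5, part 1: after a constrained arc with `u(t) = u_max` on
`[0, τ_c]`, the unconstrained exit arc `q` on `[τ_c, t_m]` (with
`q(τ_c) = p⁰ + v⁰·τ_c + u_max·τ_c²/2`, `q'(τ_c) = v⁰ + u_max·τ_c`,
`q(t_m) = pᵐ`, `q''(t_m) = 0`) additionally activates the state constraint
`v(t) ≤ v_max`, i.e. `q'(t_m) > v_max`, iff
`t_m < τ_c + 3·(pᵐ − q(τ_c))/(v⁰ + u_max·τ_c + 2·v_max)`. -/
theorem stmt_17 (a b c d p0 v0 pm tm vmax umax τc : ℝ)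
    (hτc : 0 < τc) (hτctm : τc < tm)
    (q qv qu : ℝ → ℝ)
    (hq : ∀ t, q t = a / 6 * t ^ 3 + b / 2 * t ^ 2 + c * t + d)
    (hqv : ∀ t, qv t = a / 2 * t ^ 2 + b * t + c)
    (hqu : ∀ t, qu t = a * t + b)
    (hexitp : q τc = p0 + v0 * τc + umax * τc ^ 2 / 2)
    (hexitv : qv τc = v0 + umax * τc)
    (hqm : q tm = pm) (htrans : qu tm = 0)
    (hv0nn : 0 ≤ v0) (humax : 0 < umax) (hvmax : 0 < vmax)
    (hexitlt : v0 + umax * τc < vmax) :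
    qv tm > vmax ↔
      tm < τc + 3 * (pm - q τc) / (v0 + umax * τc + 2 * vmax) := by
  have hb : b = -(a * tm) := by have := hqu tm; rw [this] at htrans; linarith
  subst hb
  have key : 3 * (pm - q τc) = (tm - τc) * (2 * qv tm + (v0 + umax * τc)) := by
    rw [← hexitv, ← hqm, hq, hq, hqv, hqv]; ring
  have hS : 0 < v0 + umax * τc + 2 * vmax := by nlinarith
  have hΔ : 0 < tm - τc := by linarith
  rw [← sub_lt_iff_lt_add', lt_div_iff₀ hS, key]
  constructor <;> intro h <;> nlinarith
end

section
/- (Theorem 5, part 2) Consider the control-constrained optimal solution in which u(t) = u_min on [0, τ_c] with 0 < τ_c < t_m, followed by the unconstrained exit arc q(t) = (a/6)·t³ + (b/2)·t² + c·t + d on [τ_c, t_m] satisfying q(τ_c) = p⁰ + v⁰·τ_c + u_min·τ_c²/2, q'(τ_c) = v⁰ + u_min·τ_c, q(t_m) = pᵐ, and q''(t_m) = 0, where u_min < 0, v⁰ + u_min·τ_c > v_min ≥ 0, and v⁰ + u_min·τ_c + 2·v_min > 0. Then the exit arc additionally activates the state constraint v(t) ≥ v_min, i.e., q'(t_m) <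 v_min, if and only if t_m > τ_c + 3·(pᵐ − q(τ_c))/(v⁰ + u_min·τ_c + 2·v_min). -/
/-- Theorem 5, part 2: after a constrained arc with `u(t) = u_min` on
`[0, τ_c]`, the unconstrained exit arc `q` on `[τ_c, t_m]` (with
`q(τ_c) = p⁰ + v⁰·τ_c + u_min·τ_c²/2`, `q'(τ_c) = v⁰ + u_min·τ_c`,
`q(t_m) = pᵐ`, `q''(t_m) = 0`) additionally activates the state constraint
`v(t) ≥ v_min`, i.e. `q'(t_m) < v_min`, iff
`t_m > τ_c + 3·(pᵐ − q(τ_c))/(v⁰ + u_min·τ_c + 2·v_min)`. -/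
theorem stmt_18 (a b c d p0 v0 pm tm vmin umin τc : ℝ)
    (hτc : 0 < τc) (hτctm : τc < tm)
    (q qv qu : ℝ → ℝ)
    (hq : ∀ t, q t = a / 6 * t ^ 3 + b / 2 * t ^ 2 + c * t + d)
    (hqv : ∀ t, qv t = a / 2 * t ^ 2 + b * t + c)
    (hqu : ∀ t, qu t = a * t + b)
    (hexitp : q τc = p0 + v0 * τc + umin * τc ^ 2 / 2)
    (hexitv : qv τc = v0 + umin * τc)
    (hqm : q tm = pm) (htrans : qu tm = 0)
    (humin : umin < 0) (hvmin : 0 ≤ vmin)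
    (hexitgt : v0 + umin * τc > vmin)
    (hpos : v0 + umin * τc + 2 * vmin > 0) :
    qv tm < vmin ↔
      tm > τc + 3 * (pm - q τc) / (v0 + umin * τc + 2 * vmin) := by
  have hb : b = -a * tm := by
    have h := htrans; rw [hqu] at h; linarith
  have h1 : pm = a / 6 * tm ^ 3 + b / 2 * tm ^ 2 + c * tm + d := by
    rw [← hqm, hq]
  have h2 : q τc = a / 6 * τc ^ 3 + b / 2 * τc ^ 2 + c * τc + d := hq τc
  have h3 : v0 + umin * τc = a / 2 * τc ^ 2 + b * τc + c := by
    rw [← hexitv, hqv]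
  have h4 : qv tm = a / 2 * tm ^ 2 + b * tm + c := hqv tm
  have key : 3 * (pm - q τc) = (tm - τc) * ((v0 + umin * τc) + 2 * qv tm) := by
    rw [h1, h2, h3, h4, hb]; ring
  have hs : 0 < tm - τc := by linarith
  constructor
  · intro h
    have h3D : 3 * (pm - q τc) < (tm - τc) * (v0 + umin * τc + 2 * vmin) := by
      rw [key]; nlinarith
    have := (div_lt_iff₀ hpos).mpr h3D
    · rw [gt_iff_lt]; linarith
  · intro h
    have hdiv : 3 * (pm - q τc) / (v0 + umin * τc + 2 * vmin) < tm - τc := by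
      linarith
    have h3D := (div_lt_iff₀ hpos).mp hdiv
    rw [key] at h3D
    nlinarith
end
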